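/- Let k > 0, σ ∈ ℂ, and complex numbers M_0,…,M_k. The inclusion Σ_{U,Y} ⊆ Σ^k_{σ,M_k} holds if and only if there exists ξ ∈ ℂ^{T−n+1} such that H_n(U) ξ = γ_n^{(k)}(σ) and H_n(Y) ξ − M_k γ_n(σ) = Σ_{j=0}^{k−1} C(k,j) M_j γ_n^{(k−j)}(σ). -/

import Mathlib

open Matrix

/-- Hankel matrix of depth `n` built from data `W = (w_0, …, w_T)`. -/
def hankel (n T : ℕ) (h : n ≤ T) (W : Fin (T + 1) → ℝ) :
    Matrix (Fin (n + 1)) (Fin (T - n + 1)) ℝ :=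
  Matrix.of fun i j => W ⟨i.1 + j.1, by omega⟩

/-- The order-`n` system with parameters `[q  -p]` explains the data `(U, Y)`. -/
def Explains (n T : ℕ) (h : n ≤ T) (U Y : Fin (T + 1) → ℝ)
    (q : Fin (n + 1) → ℝ) (p : Fin n → ℝ) : Prop :=
  ∀ j : Fin (T - n + 1),
    ∑ i : Fin (n + 1), q i * U ⟨i.1 + j.1, by omega⟩
      - ∑ i : Fin n, p i * Y ⟨i.1 + j.1, by omega⟩ = Y ⟨n + j.1, by omega⟩

/-
Both sides of the interpolation condition are linear in the coefficients: with `r = snoc p 1`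
the coefficient vector of the monic `P`, `Q⁽ᵏ⁾(σ) = ∑ qᵢ γ⁽ᵏ⁾ᵢ` and
`∑ⱼ C(k,j) Mⱼ P⁽ᵏ⁻ʲ⁾(σ) = ∑ rᵢ Eᵢ` with `E = ∑ⱼ C(k,j) Mⱼ γ⁽ᵏ⁻ʲ⁾(σ)`, while `(q, p)` explains the
data iff `qᵀ H(U) = rᵀ H(Y)`. As the explaining set is nonempty, the condition holds on it iff it
holds on the whole linear space `{(q, r) | qᵀ H(U) = rᵀ H(Y)}`, and by the Fredholm alternative
this says exactly that `(γ⁽ᵏ⁾(σ), E)` lies in the complex column space of the stacked Hankel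
matrices, i.e. that `ξ` exists.
-/

theorem LinearMap.exists_comp_eq_of_ker_le {K V W W' : Type*} [Field K]
    [AddCommGroup V] [Module K V] [AddCommGroup W] [Module K W] [AddCommGroup W'] [Module K W']
    {g : V →ₗ[K] W} {f : V →ₗ[K] W'} (hle : LinearMap.ker g ≤ LinearMap.ker f) :
    ∃ h : W →ₗ[K] W', h ∘ₗ g = f := by
  obtain ⟨h, hh⟩ := LinearMap.exists_extend
    ((LinearMap.ker g).liftQ f hle ∘ₗ g.quotKerEquivRange.symm.toLinearMap)
  refine ⟨h, LinearMap.ext fun v => ?_⟩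
  simpa using congr($hh ⟨g v, LinearMap.mem_range_self g v⟩)

section Fredholm

variable {K R ι ρ₁ ρ₂ : Type*} [Field K] [Ring R] [Algebra K R] [Fintype ι] [Fintype ρ₁]
  [Fintype ρ₂]

theorem Matrix.sum_smul_mulVec_map_algebraMap (A : Matrix ρ₁ ι K) (q : ρ₁ → K) (ξ : ι → R) :
    ∑ i, q i • (A.map (algebraMap K R) *ᵥ ξ) i = ∑ j, (q ᵥ* A) j • ξ j := by
  simp only [mulVec, dotProduct, vecMul, map_apply, Finset.smul_sum, Finset.sum_smul,
    ← Algebra.smul_def, smul_smul]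
  exact Finset.sum_comm

theorem Matrix.exists_mulVec_map_eq_and_iff [DecidableEq ρ₁] [DecidableEq ρ₂]
    (A : Matrix ρ₁ ι K) (B : Matrix ρ₂ ι K) (d : ρ₁ → R) (e : ρ₂ → R) :
    (∃ ξ : ι → R, A.map (algebraMap K R) *ᵥ ξ = d ∧ B.map (algebraMap K R) *ᵥ ξ = e) ↔
      ∀ q r, q ᵥ* A = r ᵥ* B → ∑ i, q i • d i = ∑ i, r i • e i := by
  constructor
  · rintro ⟨ξ, rfl, rfl⟩ q r h
    rw [sum_smul_mulVec_map_algebraMap, sum_smul_mulVec_map_algebraMap, h]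
  intro h
  let g := A.vecMulLinear ∘ₗ LinearMap.fst K _ _ - B.vecMulLinear ∘ₗ LinearMap.snd K _ _
  let f := Fintype.linearCombination K d ∘ₗ LinearMap.fst K _ _ -
    Fintype.linearCombination K e ∘ₗ LinearMap.snd K (ρ₁ → K) (ρ₂ → K)
  obtain ⟨φ, hφ⟩ := LinearMap.exists_comp_eq_of_ker_le (g := g) (f := f) fun v hv => by
    simpa [g, f, Fintype.linearCombination_apply, sub_eq_zero] using
      h v.1 v.2 (by simpa [g, sub_eq_zero] using hv)
  classical
  set ξ : ι → R := LinearEquiv.piRing K R ι K φ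
  have hφξ : ∀ x, φ x = ∑ j, x j • ξ j := fun x => by
    rw [← LinearEquiv.piRing_symm_apply (S := K), LinearEquiv.symm_apply_apply]
  have hf : ∀ (q : ρ₁ → K) (r : ρ₂ → K), ∑ i, q i • d i - ∑ i, r i • e i =
      ∑ i, q i • (A.map (algebraMap K R) *ᵥ ξ) i - ∑ i, r i • (B.map (algebraMap K R) *ᵥ ξ) i := by
    intro q r
    have := congr($hφ (q, r))
    simp only [LinearMap.comp_apply, LinearMap.sub_apply, LinearMap.coe_fst, LinearMap.coe_snd,
      LinearMap.flip_apply, vecMulBilin_apply, hφξ, Pi.sub_apply, sub_smul,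
      Finset.sum_sub_distrib, Fintype.linearCombination_apply, g, f] at this
    rw [sum_smul_mulVec_map_algebraMap, sum_smul_mulVec_map_algebraMap, this]
  refine ⟨ξ, funext fun i => ?_, funext fun i => ?_⟩
  · simpa using (hf (Pi.single i 1) 0).symm
  · simpa using (hf 0 (Pi.single i 1)).symm

end Fredholm

theorem Matrix.forall_vecMul_eq_vecMul_iff_forall_snoc_one {K W ρ ι : Type*} [CommRing K]
    [AddCommGroup W] [Module K W] [Fintype ρ] {n : ℕ}
    (A : Matrix ρ ι K) (B : Matrix (Fin (n + 1)) ι K) (d : ρ → W) (e : Fin (n + 1) → W)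
    (h₀ : ∃ (q₀ : ρ → K) (p₀ : Fin n → K), q₀ ᵥ* A = Fin.snoc p₀ 1 ᵥ* B) :
    (∀ (q : ρ → K) (r : Fin (n + 1) → K), q ᵥ* A = r ᵥ* B →
        ∑ i, q i • d i = ∑ i, r i • e i) ↔
      ∀ (q : ρ → K) (p : Fin n → K), q ᵥ* A = Fin.snoc p 1 ᵥ* B →
        ∑ i, q i • d i = ∑ i, (Fin.snoc p 1 : Fin (n + 1) → K) i • e i := by
  refine ⟨fun h q p => h q _, fun h q r hqr => ?_⟩
  obtain ⟨q₀, p₀, hqp₀⟩ := h₀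
  -- shift `(q, r)` along the solution `(q₀, snoc p₀ 1)` until the leading coefficient becomes 1
  set t := 1 - r (Fin.last n)
  set r' : Fin (n + 1) → K := r + t • Fin.snoc p₀ 1
  have hr' : Fin.snoc (Fin.init r') 1 = r' := by
    conv_rhs => rw [← Fin.snoc_init_self r']
    simp [r', t]
  have h₁ := h (q + t • q₀) (Fin.init r') (by
    rw [hr', add_vecMul, add_vecMul, smul_vecMul, smul_vecMul, hqr, hqp₀])
  have h₂ := h q₀ p₀ hqp₀
  rw [hr'] at h₁
  simp only [r', Pi.add_apply, Pi.smul_apply, add_smul, smul_eq_mul, mul_smul,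
    Finset.sum_add_distrib, ← Finset.smul_sum, h₂] at h₁
  exact add_right_cancel h₁

theorem explains_iff_vecMul_hankel (n T : ℕ) (hT : n ≤ T) (U Y : Fin (T + 1) → ℝ)
    (q : Fin (n + 1) → ℝ) (p : Fin n → ℝ) :
    Explains n T hT U Y q p ↔ q ᵥ* hankel n T hT U = Fin.snoc p 1 ᵥ* hankel n T hT Y := by
  simp only [Explains, funext_iff, vecMul, dotProduct, hankel, of_apply,
    Fin.sum_univ_castSucc (n := n), Fin.snoc_castSucc, Fin.snoc_last, Fin.val_castSucc,
    Fin.val_last, one_mul]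
  exact forall_congr' fun j => sub_eq_iff_eq_add'

theorem iteratedDeriv_sum_mul_pow {𝕜 ι : Type*} [NontriviallyNormedField 𝕜] (m : ℕ) (x : 𝕜)
    (s : Finset ι) (c : ι → 𝕜) (e : ι → ℕ) :
    iteratedDeriv m (fun z => ∑ i ∈ s, c i * z ^ e i) x =
      ∑ i ∈ s, c i * iteratedDeriv m (fun z => z ^ e i) x := by
  rw [iteratedDeriv_fun_sum fun i _ => by fun_prop]
  simp only [iteratedDeriv_const_mul_field]

theorem pow_add_sum_mul_pow_eq_sum_snoc {n : ℕ} (p : Fin n → ℝ) (z : ℂ) :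
    z ^ n + ∑ i : Fin n, (p i : ℂ) * z ^ (i : ℕ) =
      ∑ i : Fin (n + 1), ((Fin.snoc p 1 : Fin (n + 1) → ℝ) i : ℂ) * z ^ (i : ℕ) := by
  simp [Fin.sum_univ_castSucc, add_comm]

/-- `monomialDerivs n σ m` is the paper's `γ_n^{(m)}(σ)`. -/
noncomputable def monomialDerivs (n : ℕ) (σ : ℂ) (m : ℕ) : Fin (n + 1) → ℂ :=
  fun i => iteratedDeriv m (fun z : ℂ => z ^ (i : ℕ)) σ

noncomputable def leibnizVec (n : ℕ) (σ : ℂ) (k : ℕ) (M : ℕ → ℂ) : Fin (n + 1) → ℂ :=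
  ∑ j ∈ Finset.range (k + 1), ((k.choose j : ℂ) * M j) • monomialDerivs n σ (k - j)

theorem iteratedDeriv_sum_ofReal_mul_pow {n : ℕ} (σ : ℂ) (m : ℕ) (c : Fin (n + 1) → ℝ) :
    iteratedDeriv m (fun z : ℂ => ∑ i : Fin (n + 1), (c i : ℂ) * z ^ (i : ℕ)) σ =
      ∑ i, c i • monomialDerivs n σ m i := by
  simp [iteratedDeriv_sum_mul_pow, monomialDerivs, Complex.real_smul]

theorem sum_choose_mul_iteratedDeriv_monic {n : ℕ} (σ : ℂ) (k : ℕ) (M : ℕ → ℂ)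
    (p : Fin n → ℝ) :
    ∑ j ∈ Finset.range (k + 1), (k.choose j : ℂ) * M j *
        iteratedDeriv (k - j) (fun z : ℂ => z ^ n + ∑ i : Fin n, (p i : ℂ) * z ^ (i : ℕ)) σ =
      ∑ i, (Fin.snoc p 1 : Fin (n + 1) → ℝ) i • leibnizVec n σ k M i := by
  simp_rw [pow_add_sum_mul_pow_eq_sum_snoc, iteratedDeriv_sum_ofReal_mul_pow, leibnizVec,
    Finset.sum_apply, Pi.smul_apply, Finset.smul_sum, Finset.mul_sum]
  rw [Finset.sum_comm]
  exact Finset.sum_congr rfl fun i _ => Finset.sum_congr rfl fun j _ => by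
    rw [smul_eq_mul, mul_smul_comm]

theorem leibnizVec_eq_add (n : ℕ) (σ : ℂ) (k : ℕ) (M : ℕ → ℂ) :
    leibnizVec n σ k M =
      (fun i : Fin (n + 1) => ∑ j ∈ Finset.range k, (k.choose j : ℂ) * M j *
        iteratedDeriv (k - j) (fun z : ℂ => z ^ (i : ℕ)) σ) +
        M k • fun i : Fin (n + 1) => σ ^ (i : ℕ) := by
  ext i
  simp [leibnizVec, Finset.sum_range_succ, monomialDerivs]

theorem stmt_10_general (n T : ℕ) (hT : n ≤ T) (U Y : Fin (T + 1) → ℝ) (σ : ℂ)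
    (k : ℕ) (M : ℕ → ℂ)
    (hne : ∃ (q : Fin (n + 1) → ℝ) (p : Fin n → ℝ), Explains n T hT U Y q p) :
    (∀ (q : Fin (n + 1) → ℝ) (p : Fin n → ℝ), Explains n T hT U Y q p →
        iteratedDeriv k (fun z : ℂ => ∑ i : Fin (n + 1), (q i : ℂ) * z ^ (i : ℕ)) σ
          = ∑ j ∈ Finset.range (k + 1), (k.choose j : ℂ) * M j *
              iteratedDeriv (k - j)
                (fun z : ℂ => z ^ n + ∑ i : Fin n, (p i : ℂ) * z ^ (i : ℕ)) σ) ↔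
      ∃ ξ : Fin (T - n + 1) → ℂ,
        ((hankel n T hT U).map (Complex.ofReal : ℝ → ℂ)) *ᵥ ξ
            = (fun i : Fin (n + 1) => iteratedDeriv k (fun z : ℂ => z ^ (i : ℕ)) σ) ∧
        ((hankel n T hT Y).map (Complex.ofReal : ℝ → ℂ)) *ᵥ ξ
            - M k • (fun i : Fin (n + 1) => σ ^ (i : ℕ))
          = (fun i : Fin (n + 1) => ∑ j ∈ Finset.range k, (k.choose j : ℂ) * M j *
              iteratedDeriv (k - j) (fun z : ℂ => z ^ (i : ℕ)) σ) := by
  simp_rw [explains_iff_vecMul_hankel] at hne ⊢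
  simp_rw [iteratedDeriv_sum_ofReal_mul_pow, sum_choose_mul_iteratedDeriv_monic]
  rw [← Matrix.forall_vecMul_eq_vecMul_iff_forall_snoc_one _ _ _ _ hne, ← Complex.coe_algebraMap,
    ← Matrix.exists_mulVec_map_eq_and_iff]
  simp_rw [sub_eq_iff_eq_add, ← leibnizVec_eq_add]
  rfl

theorem stmt_10 (n T : ℕ) (hT : n ≤ T) (U Y : Fin (T + 1) → ℝ) (σ : ℂ)
    (k : ℕ) (hk : 0 < k) (M : ℕ → ℂ)
    (hne : ∃ (q : Fin (n + 1) → ℝ) (p : Fin n → ℝ), Explains n T hT U Y q p) :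
    (∀ (q : Fin (n + 1) → ℝ) (p : Fin n → ℝ), Explains n T hT U Y q p →
        iteratedDeriv k (fun z : ℂ => ∑ i : Fin (n + 1), (q i : ℂ) * z ^ (i : ℕ)) σ
          = ∑ j ∈ Finset.range (k + 1), (k.choose j : ℂ) * M j *
              iteratedDeriv (k - j)
                (fun z : ℂ => z ^ n + ∑ i : Fin n, (p i : ℂ) * z ^ (i : ℕ)) σ) ↔
      ∃ ξ : Fin (T - n + 1) → ℂ,
        ((hankel n T hT U).map (Complex.ofReal : ℝ → ℂ)) *ᵥ ξ
            = (fun i : Fin (n + 1) => iteratedDeriv k (fun z : ℂ => z ^ (i : ℕ)) σ) ∧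
        ((hankel n T hT Y).map (Complex.ofReal : ℝ → ℂ)) *ᵥ ξ
            - M k • (fun i : Fin (n + 1) => σ ^ (i : ℕ))
          = (fun i : Fin (n + 1) => ∑ j ∈ Finset.range k, (k.choose j : ℂ) * M j *
              iteratedDeriv (k - j) (fun z : ℂ => z ^ (i : ℕ)) σ) :=
  stmt_10_general n T hT U Y σ k M hne
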